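/- arXiv:2011.07238 — 2 statements merged into one kernel-verified Lean document; each statement's English description precedes it below -/
import Mathlib

section
/- Let y_i(r) = Rω_i/(N ∑_k ω_k r_k) - p ω_i with ω_i > 0 distinct, R, N, p > 0. Every r* ∈ Δ with ∑_i ω_i r*_i = R/(pN) satisfies y_i(r*) = 0 for all i, and is a neutrally stable strategy: for all ε ∈ (0,1) and all r' ∈ Δ, ∑_i r*_i y_i((1-ε)r* + εr') - ∑_i r'_i y_i((1-ε)r* + εr') = (R/(Np) - ∑_k ω_k r'_k)(R/(N((1-ε)R/(Np) + ε∑ω_k r'_k)) - p) ≥ 0, with equality iff ∑_k ω_k r'_k = R/(Np). -/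
open Finset

/-- For payoffs `y_i(r) = R ω_i/(N ∑_k ω_k r_k) - p ω_i` with distinct `ω_i > 0` and
`R, N, p > 0`: any `r* ∈ Δ` with `∑ ω_i r*_i = R/(pN)` has `y_i(r*) = 0` for all `i` and is
neutrally stable: for all `ε ∈ (0,1)` and `r' ∈ Δ`, the invasion payoff difference equals
`(R/(Np) - ∑ ω_k r'_k)(R/(N((1-ε)R/(Np) + ε ∑ ω_k r'_k)) - p) ≥ 0`, with equality iff
`∑ ω_k r'_k = R/(Np)`. -/
theorem interior_NSS_mining_game
    {M : ℕ} (R N p : ℝ) (hR : 0 < R) (hN : 0 < N) (hp : 0 < p)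
    (ω : Fin M → ℝ) (hωpos : ∀ i, 0 < ω i) (hωinj : Function.Injective ω)
    (y : Fin M → (Fin M → ℝ) → ℝ)
    (hy : ∀ i r, y i r = R * ω i / (N * ∑ k, ω k * r k) - p * ω i)
    (rstar : Fin M → ℝ) (hnn : ∀ j, 0 ≤ rstar j) (hsum : ∑ j, rstar j = 1)
    (heq : ∑ i, ω i * rstar i = R / (p * N))
    (ε : ℝ) (hε : ε ∈ Set.Ioo (0:ℝ) 1)
    (r' : Fin M → ℝ) (hr'nn : ∀ j, 0 ≤ r' j) (hr'sum : ∑ j, r' j = 1) :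
    (∀ i, y i rstar = 0) ∧
    (∑ i, rstar i * y i (fun j => (1 - ε) * rstar j + ε * r' j))
      - (∑ i, r' i * y i (fun j => (1 - ε) * rstar j + ε * r' j))
      = (R / (N * p) - ∑ k, ω k * r' k)
        * (R / (N * ((1 - ε) * (R / (N * p)) + ε * ∑ k, ω k * r' k)) - p) ∧
    0 ≤ (∑ i, rstar i * y i (fun j => (1 - ε) * rstar j + ε * r' j))
      - (∑ i, r' i * y i (fun j => (1 - ε) * rstar j + ε * r' j)) ∧
    ((∑ i, rstar i * y i (fun j => (1 - ε) * rstar j + ε * r' j))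
      - (∑ i, r' i * y i (fun j => (1 - ε) * rstar j + ε * r' j)) = 0
        ↔ ∑ k, ω k * r' k = R / (N * p)) := by
  obtain ⟨hε0, hε1⟩ := hε
  have h1ε : (0:ℝ) < 1 - ε := by linarith
  set S := ∑ k, ω k * r' k with hSdef
  set Q := R / (N * p) with hQdef
  have hQ : 0 < Q := by positivity
  have hS : 0 < S := by
    have hj : ∃ j, r' j ≠ 0 := by
      by_contra h
      push_neg at h
      simp [h] at hr'sum
    obtain ⟨j, hj⟩ := hj
    apply Finset.sum_pos'
    · intro i _; exact mul_nonneg (hωpos i).le (hr'nn i)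
    · exact ⟨j, Finset.mem_univ j,
        mul_pos (hωpos j) (lt_of_le_of_ne (hr'nn j) (Ne.symm hj))⟩
  set D := (1 - ε) * Q + ε * S with hDdef
  have hD : 0 < D := by positivity
  have heq' : ∑ i, ω i * rstar i = Q := by rw [heq, hQdef, mul_comm]
  have hinner : ∑ k, ω k * ((1 - ε) * rstar k + ε * r' k) = D := by
    have : ∑ k, ω k * ((1 - ε) * rstar k + ε * r' k)
        = (1 - ε) * (∑ k, ω k * rstar k) + ε * S := by
      rw [Finset.mul_sum, Finset.mul_sum, ← Finset.sum_add_distrib]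
      exact Finset.sum_congr rfl fun k _ => by ring
    rw [this, heq']
  have hyform : ∀ c : Fin M → ℝ,
      ∑ i, c i * y i (fun j => (1 - ε) * rstar j + ε * r' j)
        = (∑ i, ω i * c i) * (R / (N * D) - p) := by
    intro c
    rw [Finset.sum_mul]
    refine Finset.sum_congr rfl fun i _ => ?_
    rw [hy, hinner]
    ring
  have hdiff :
      (∑ i, rstar i * y i (fun j => (1 - ε) * rstar j + ε * r' j))
        - (∑ i, r' i * y i (fun j => (1 - ε) * rstar j + ε * r' j))
      = (Q - S) * (R / (N * D) - p) := by
    rw [hyform rstar, hyform r', heq', ← hSdef]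
    ring
  have hfac : (Q - S) * (R / (N * D) - p) = ε * p * (Q - S) ^ 2 / D := by
    have hRQ : R = N * p * Q := by
      rw [hQdef]; field_simp
    rw [hDdef, hRQ]
    field_simp
    ring
  refine ⟨?_, ?_, ?_, ?_⟩
  · intro i
    rw [hy, heq]
    have : N * (R / (p * N)) = R / p := by field_simp
    rw [this]
    field_simp
    ring
  · rw [hdiff]
  · rw [hdiff, hfac]
    positivity
  · rw [hdiff, hfac]
    constructor
    · intro h
      have : (Q - S) ^ 2 = 0 := by
        have hεp : 0 < ε * p := mul_pos hε0 hp
        have := (div_eq_zero_iff.mp h).resolve_right hD.ne'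
        rcases mul_eq_zero.mp this with h' | h'
        · exact absurd h' hεp.ne'
        · exact h'
      have := pow_eq_zero_iff (n := 2) (by norm_num) |>.mp this
      linarith [sub_eq_zero.mp this]
    · intro h
      rw [h]
      simp
end

section
/- For c ∈ (0,1] and α ∈ [0,1], define g(α) = (1/2)(1 + (1-α)e^{-cα} - α e^{-c(1-α)}). Then |g(α) - (1-α)| ≤ c/4 for all α ∈ [0,1]. -/
open Real

/-- For `c ∈ (0,1]` and `α ∈ [0,1]`, the stale-block probability
`g(α) = (1/2)(1 + (1-α)e^{-cα} - α e^{-c(1-α)})` satisfies `|g(α) - (1-α)| ≤ c/4`. -/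
theorem stale_probability_linear_approx
    (c : ℝ) (hc : c ∈ Set.Ioc (0:ℝ) 1)
    (g : ℝ → ℝ)
    (hg : ∀ α, g α = (1 / 2) * (1 + (1 - α) * exp (-(c * α)) - α * exp (-(c * (1 - α))))) :
    ∀ α ∈ Set.Icc (0:ℝ) 1, |g α - (1 - α)| ≤ c / 4 := by
  obtain ⟨hc0, hc1⟩ := hc
  rintro α ⟨ha0, ha1⟩
  rw [hg]
  have h1 : exp (-(c * α)) ≤ 1 := by
    rw [Real.exp_le_one_iff]; nlinarith
  have h2 : 1 - c * α ≤ exp (-(c * α)) := by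
    have := Real.add_one_le_exp (-(c * α)); linarith
  have h3 : exp (-(c * (1 - α))) ≤ 1 := by
    rw [Real.exp_le_one_iff]; nlinarith
  have h4 : 1 - c * (1 - α) ≤ exp (-(c * (1 - α))) := by
    have := Real.add_one_le_exp (-(c * (1 - α))); linarith
  rw [abs_le]
  constructor <;> nlinarith [mul_nonneg ha0 (by linarith : (0:ℝ) ≤ 1 - α),
    sq_nonneg (α - 1/2), mul_pos hc0 hc0]
end
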